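/- For every integer n ≥ 1, every σ > 0, every ρ ≥ 0 and every y > 0: lim_{h→0} (σ²/(h(2ρ+h))) · ( F_{χ²_n(ρ²/σ²)}(y) − F_{χ²_n((ρ+h)²/σ²)}(y) ) = f_{χ²_{n+2}(ρ²/σ²)}(y). -/

import Mathlib

/-
The noncentral density is a Poisson(λ/2) mixture of central χ² densities, so
`F_k(λ, y) = ∑ wᵢ(λ) Pᵢ` with `Pᵢ` the cdf of χ²_{k+2i} at `y`. Differentiating the exponential
generating function termwise, `∂F/∂λ = ½ ∑ wᵢ (Pᵢ₊₁ - Pᵢ)`, and integrating by parts,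
`Pᵢ - Pᵢ₊₁ = 2 f_{χ²_{k+2i+2}}(y)`; hence `∂F/∂λ = -f_{χ²_{k+2}(λ)}(y)`. The quotient in the
theorem is minus the slope of `λ ↦ F_n(λ, y)` between `ρ²/σ²` and `(ρ+h)²/σ²`, whose difference
is `h(2ρ+h)/σ²`, and this difference is nonzero for small `h ≠ 0`.
-/

open MeasureTheory Real Filter

noncomputable section

/-- Noncentral chi-square pdf with `k` degrees of freedom and noncentrality `lam`. -/
def ncChiPdf (k : ℕ) (lam y : ℝ) : ℝ :=
  ∑' i : ℕ, (Real.exp (-lam / 2) * (lam / 2) ^ i / (i.factorial : ℝ)) *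
    (y ^ ((k : ℝ) / 2 + i - 1) * Real.exp (-y / 2) /
      (2 ^ ((k : ℝ) / 2 + i) * Real.Gamma ((k : ℝ) / 2 + i)))

/-- Noncentral chi-square cdf. -/
def ncChiCdf (k : ℕ) (lam y : ℝ) : ℝ := ∫ t in (0:ℝ)..y, ncChiPdf k lam t

end

open Set Topology

/-- The density of the central χ² law with `2 * a` degrees of freedom
(the Gamma law of shape `a` and scale `2`). -/
noncomputable def gammaPdf (a t : ℝ) : ℝ := t ^ (a - 1) * exp (-t / 2) / (2 ^ a * Gamma a)

noncomputable def gammaCdf (a y : ℝ) : ℝ := ∫ t in (0 : ℝ)..y, gammaPdf a t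

/-- The mass at `i` of the Poisson law with mean `lam / 2`. -/
noncomputable def poissonWeight (lam : ℝ) (i : ℕ) : ℝ :=
  exp (-lam / 2) * (lam / 2) ^ i / i.factorial

lemma hasDerivAt_exp_neg_div_two (x : ℝ) :
    HasDerivAt (fun t => exp (-t / 2)) (exp (-x / 2) * (-1 / 2)) x := by
  simpa [Function.comp_def] using
    (hasDerivAt_exp (-x / 2)).comp x ((hasDerivAt_id x).neg.div_const 2)

section GammaLaw

variable {a : ℝ}

lemma gammaPdf_nonneg (ha : 0 < a) {t : ℝ} (ht : 0 ≤ t) : 0 ≤ gammaPdf a t := by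
  have := Gamma_pos_of_pos ha
  unfold gammaPdf; positivity

lemma integrableOn_gammaPdf (ha : 0 < a) : IntegrableOn (gammaPdf a) (Ioi 0) := by
  refine IntegrableOn.congr_fun ((integrableOn_rpow_mul_exp_neg_mul_rpow (s := a - 1)
    (by linarith) zero_lt_one (by norm_num : (0 : ℝ) < 1 / 2)).div_const (2 ^ a * Gamma a))
    (fun t _ => ?_) measurableSet_Ioi
  simp only [gammaPdf, rpow_one]
  ring_nf

lemma integral_gammaPdf (ha : 0 < a) : ∫ t in Ioi 0, gammaPdf a t = 1 := by
  have h2 : (0 : ℝ) < 2 ^ a * Gamma a := by have := Gamma_pos_of_pos ha; positivity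
  have hI := integral_rpow_mul_exp_neg_mul_Ioi ha (by norm_num : (0 : ℝ) < 1 / 2)
  rw [one_div_one_div] at hI
  simp only [gammaPdf, integral_div]
  rw [div_eq_one_iff_eq h2.ne', ← hI]
  congr with t
  ring_nf

lemma gammaCdf_nonneg (ha : 0 < a) {y : ℝ} (hy : 0 ≤ y) : 0 ≤ gammaCdf a y :=
  intervalIntegral.integral_nonneg hy fun _ ht => gammaPdf_nonneg ha ht.1

lemma gammaCdf_le_one (ha : 0 < a) {y : ℝ} (hy : 0 ≤ y) : gammaCdf a y ≤ 1 := by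
  rw [← integral_gammaPdf ha, gammaCdf, intervalIntegral.integral_of_le hy]
  refine setIntegral_mono_set (integrableOn_gammaPdf ha) ?_ Ioc_subset_Ioi_self.eventuallyLE
  filter_upwards [self_mem_ae_restrict measurableSet_Ioi] with t ht
  exact gammaPdf_nonneg ha (le_of_lt ht)

lemma abs_gammaCdf_le_one (ha : 0 < a) {y : ℝ} (hy : 0 ≤ y) : |gammaCdf a y| ≤ 1 :=
  abs_le.2 ⟨by linarith [gammaCdf_nonneg ha hy], gammaCdf_le_one ha hy⟩

lemma hasDerivAt_gammaPdf_add_one (ha : 0 < a) {t : ℝ} (ht : 0 < t) :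
    HasDerivAt (gammaPdf (a + 1)) ((gammaPdf a t - gammaPdf (a + 1) t) / 2) t := by
  have hpow : HasDerivAt (fun t : ℝ => t ^ a) (a * t ^ (a - 1)) t :=
    hasDerivAt_rpow_const (Or.inl ht.ne')
  have hfun : gammaPdf (a + 1) = fun s => s ^ a * exp (-s / 2) / (2 ^ (a + 1) * Gamma (a + 1)) := by
    ext s; simp [gammaPdf]
  rw [hfun]
  refine ((hpow.mul (hasDerivAt_exp_neg_div_two t)).div_const
    (2 ^ (a + 1) * Gamma (a + 1))).congr_deriv ?_
  simp only [gammaPdf, rpow_add_one two_ne_zero, Gamma_add_one ha.ne']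
  rw [show t ^ a = t ^ (a - 1) * t by rw [← rpow_add_one ht.ne']; ring_nf]
  field_simp
  ring

lemma intervalIntegrable_gammaPdf (ha : 0 < a) {y : ℝ} (hy : 0 ≤ y) :
    IntervalIntegrable (gammaPdf a) volume 0 y :=
  (intervalIntegrable_iff_integrableOn_Ioc_of_le hy).2
    ((integrableOn_gammaPdf ha).mono_set Ioc_subset_Ioi_self)

lemma continuous_gammaPdf (ha : 1 ≤ a) : Continuous (gammaPdf a) :=
  (((continuous_rpow_const (by linarith)).mul (by fun_prop))).div_const _

lemma gammaCdf_sub_gammaCdf_add_one (ha : 0 < a) {y : ℝ} (hy : 0 ≤ y) :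
    gammaCdf a y - gammaCdf (a + 1) y = 2 * gammaPdf (a + 1) y := by
  have hftc := intervalIntegral.integral_eq_sub_of_hasDerivAt_of_le hy
    (continuous_gammaPdf (by linarith)).continuousOn
    (fun t ht => hasDerivAt_gammaPdf_add_one ha ht.1)
    (((intervalIntegrable_gammaPdf ha hy).sub
      (intervalIntegrable_gammaPdf (by linarith) hy)).div_const 2)
  have hzero : gammaPdf (a + 1) 0 = 0 := by
    simp [gammaPdf, zero_rpow ha.ne']
  rw [intervalIntegral.integral_div, intervalIntegral.integral_sub
    (intervalIntegrable_gammaPdf ha hy) (intervalIntegrable_gammaPdf (by linarith) hy),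
    hzero] at hftc
  rw [gammaCdf, gammaCdf]
  linarith

end GammaLaw

section ExpGeneratingFunction

open Nat

variable {A : ℕ → ℝ} {C : ℝ}

lemma hasDerivAt_pow_succ_div_factorial (i : ℕ) (x : ℝ) :
    HasDerivAt (fun z : ℝ => z ^ (i + 1) / (i + 1)!) (x ^ i / i !) x := by
  refine ((hasDerivAt_pow (i + 1) x).div_const _).congr_deriv ?_
  rw [factorial_succ]
  push_cast
  field_simp

lemma norm_pow_div_factorial_mul_le (hA : ∀ i, |A i| ≤ C) {x R : ℝ} (hx : |x| ≤ R) (i : ℕ) :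
    ‖x ^ i / i ! * A i‖ ≤ R ^ i / i ! * C := by
  rw [Real.norm_eq_abs, abs_mul, abs_div, abs_pow, Nat.abs_cast]
  have hR : 0 ≤ R := (abs_nonneg x).trans hx
  exact mul_le_mul (by gcongr) (hA i) (abs_nonneg _) (by positivity)

lemma summable_pow_div_factorial_mul (hA : ∀ i, |A i| ≤ C) (x : ℝ) :
    Summable fun i => x ^ i / i ! * A i :=
  .of_norm_bounded ((Real.summable_pow_div_factorial |x|).mul_right C)
    (norm_pow_div_factorial_mul_le hA le_rfl)

lemma hasDerivAt_tsum_pow_div_factorial_mul (hA : ∀ i, |A i| ≤ C) (x : ℝ) :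
    HasDerivAt (fun z => ∑' i, z ^ i / i ! * A i) (∑' i, x ^ i / i ! * A (i + 1)) x := by
  have hshift : (fun z => ∑' i, z ^ i / i ! * A i) =
      fun z => A 0 + ∑' i, z ^ (i + 1) / (i + 1)! * A (i + 1) := by
    ext z
    simp [(summable_pow_div_factorial_mul hA z).tsum_eq_zero_add]
  rw [hshift]
  refine (hasDerivAt_tsum_of_isPreconnected (t := Ioo (-(|x| + 1)) (|x| + 1)) (y₀ := x)
    ((Real.summable_pow_div_factorial (|x| + 1)).mul_right C) isOpen_Ioo isPreconnected_Ioo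
    (fun i z _ => (hasDerivAt_pow_succ_div_factorial i z).mul_const (A (i + 1)))
    (fun i z hz => norm_pow_div_factorial_mul_le (fun i => hA (i + 1))
      (abs_le.2 ⟨hz.1.le, hz.2.le⟩) i)
    ?_ ((summable_nat_add_iff 1).2 (summable_pow_div_factorial_mul hA x)) ?_).const_add (A 0)
  all_goals exact ⟨by linarith [neg_abs_le x], by linarith [le_abs_self x]⟩

end ExpGeneratingFunction

section PoissonMixture

open Nat

lemma tsum_poissonWeight_mul (A : ℕ → ℝ) (lam : ℝ) :
    ∑' i, poissonWeight lam i * A i = exp (-lam / 2) * ∑' i, (lam / 2) ^ i / i ! * A i := by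
  rw [← tsum_mul_left]
  congr with i
  simp only [poissonWeight]
  ring

variable {A : ℕ → ℝ} {C : ℝ}

lemma summable_poissonWeight_mul (hA : ∀ i, |A i| ≤ C) (lam : ℝ) :
    Summable fun i => poissonWeight lam i * A i :=
  ((summable_pow_div_factorial_mul hA (lam / 2)).mul_left (exp (-lam / 2))).congr fun i => by
    simp only [poissonWeight]
    ring

lemma hasDerivAt_tsum_poissonWeight_mul (hA : ∀ i, |A i| ≤ C) (lam : ℝ) :
    HasDerivAt (fun l => ∑' i, poissonWeight l i * A i)
      ((∑' i, poissonWeight lam i * (A (i + 1) - A i)) / 2) lam := by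
  have hE := (hasDerivAt_tsum_pow_div_factorial_mul hA (lam / 2)).comp lam
    ((hasDerivAt_id lam).div_const 2)
  have hsub : ∑' i, poissonWeight lam i * (A (i + 1) - A i) =
      ∑' i, poissonWeight lam i * A (i + 1) - ∑' i, poissonWeight lam i * A i := by
    rw [← (summable_poissonWeight_mul (fun i => hA (i + 1)) lam).tsum_sub
      (summable_poissonWeight_mul hA lam)]
    simp only [mul_sub]
  rw [funext (tsum_poissonWeight_mul A)]
  refine ((hasDerivAt_exp_neg_div_two lam).mul hE).congr_deriv ?_
  rw [hsub, tsum_poissonWeight_mul, tsum_poissonWeight_mul]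
  simp only [Function.comp_apply, id]
  ring

end PoissonMixture

section NoncentralChiSq

variable {k : ℕ} {y : ℝ}

lemma ncChiPdf_eq_tsum (k : ℕ) (lam y : ℝ) :
    ncChiPdf k lam y = ∑' i, poissonWeight lam i * gammaPdf (k / 2 + i) y :=
  rfl

lemma half_add_pos (hk : 0 < k) (i : ℕ) : 0 < (k : ℝ) / 2 + i := by
  have : (0 : ℝ) < k := Nat.cast_pos.2 hk
  positivity

lemma ncChiCdf_eq_tsum (hk : 0 < k) (lam : ℝ) (hy : 0 ≤ y) :
    ncChiCdf k lam y = ∑' i, poissonWeight lam i * gammaCdf (k / 2 + i) y := by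
  have hint (i : ℕ) : Integrable (fun t => poissonWeight lam i * gammaPdf (k / 2 + i) t)
      (volume.restrict (Ioc 0 y)) :=
    ((integrableOn_gammaPdf (half_add_pos hk i)).mono_set Ioc_subset_Ioi_self).const_mul _
  have hnorm (i : ℕ) : ∫ t in Ioc 0 y, ‖poissonWeight lam i * gammaPdf (k / 2 + i) t‖ =
      |poissonWeight lam i * gammaCdf (k / 2 + i) y| := by
    rw [abs_mul, abs_of_nonneg (gammaCdf_nonneg (half_add_pos hk i) hy), gammaCdf,
      intervalIntegral.integral_of_le hy, ← integral_const_mul]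
    refine setIntegral_congr_fun measurableSet_Ioc fun t ht => ?_
    rw [norm_mul, Real.norm_eq_abs,
      Real.norm_of_nonneg (gammaPdf_nonneg (half_add_pos hk i) ht.1.le)]
  have hsum : Summable fun i => ∫ t in Ioc 0 y, ‖poissonWeight lam i * gammaPdf (k / 2 + i) t‖ := by
    simp_rw [hnorm]
    exact (summable_poissonWeight_mul (fun i => abs_gammaCdf_le_one (half_add_pos hk i) hy) lam).abs
  rw [ncChiCdf, intervalIntegral.integral_of_le hy]
  simp_rw [ncChiPdf_eq_tsum]
  rw [← integral_tsum_of_summable_integral_norm hint hsum]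
  congr with i
  rw [integral_const_mul, gammaCdf, intervalIntegral.integral_of_le hy]

theorem hasDerivAt_ncChiCdf (hk : 0 < k) (hy : 0 ≤ y) (lam : ℝ) :
    HasDerivAt (fun l => ncChiCdf k l y) (-ncChiPdf (k + 2) lam y) lam := by
  rw [funext fun l => ncChiCdf_eq_tsum hk l hy]
  refine (hasDerivAt_tsum_poissonWeight_mul
    (fun i => abs_gammaCdf_le_one (half_add_pos hk i) hy) lam).congr_deriv ?_
  rw [ncChiPdf_eq_tsum, ← tsum_div_const, ← tsum_neg]
  refine tsum_congr fun i => ?_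
  have hshift : ((k + 2 : ℕ) : ℝ) / 2 + i = (k / 2 + i : ℝ) + 1 := by push_cast; ring
  have hsucc : (k : ℝ) / 2 + ((i + 1 : ℕ) : ℝ) = (k / 2 + i : ℝ) + 1 := by push_cast; ring
  rw [hshift, hsucc]
  linear_combination (-poissonWeight lam i / 2) *
    gammaCdf_sub_gammaCdf_add_one (half_add_pos hk i) hy

end NoncentralChiSq

theorem ncChi_cdf_difference_limit_general
    (n : ℕ) (hn : 1 ≤ n) (σ ρ y : ℝ) (hσ : 0 < σ) (hy : 0 < y) :
    Filter.Tendsto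
      (fun h : ℝ => (σ ^ 2 / (h * (2 * ρ + h))) *
        (ncChiCdf n (ρ ^ 2 / σ ^ 2) y - ncChiCdf n ((ρ + h) ^ 2 / σ ^ 2) y))
      (nhdsWithin 0 {0}ᶜ) (nhds (ncChiPdf (n + 2) (ρ ^ 2 / σ ^ 2) y)) := by
  have hslope := hasDerivAt_iff_tendsto_slope.mp (hasDerivAt_ncChiCdf hn hy.le (ρ ^ 2 / σ ^ 2))
  have hne : ∀ᶠ h in 𝓝[≠] (0 : ℝ), h ≠ -(2 * ρ) := by
    rcases eq_or_ne ρ 0 with rfl | hρ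
    · simpa using eventually_mem_nhdsWithin (a := (0 : ℝ)) (s := {0}ᶜ)
    · exact eventually_ne_nhdsWithin (by simpa using hρ)
  have hlam : Tendsto (fun h => (ρ + h) ^ 2 / σ ^ 2) (𝓝[≠] 0) (𝓝[≠] (ρ ^ 2 / σ ^ 2)) := by
    refine tendsto_nhdsWithin_of_tendsto_nhds_of_eventually_within _
      ((Continuous.tendsto' (by fun_prop) 0 _ (by simp)).mono_left nhdsWithin_le_nhds) ?_
    filter_upwards [self_mem_nhdsWithin, hne] with h h0 h2ρ
    rw [mem_compl_singleton_iff, ne_eq, div_left_inj' (by positivity)]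
    intro heq
    exact mul_ne_zero h0 (add_eq_zero_iff_neg_eq'.not.2 h2ρ.symm) (by linear_combination heq)
  have hlim := (hslope.comp hlam).neg
  rw [neg_neg] at hlim
  refine hlim.congr fun h => ?_
  rw [Function.comp_apply, slope_def_field,
    show (ρ + h) ^ 2 / σ ^ 2 - ρ ^ 2 / σ ^ 2 = h * (2 * ρ + h) / σ ^ 2 by ring,
    div_div_eq_mul_div]
  ring

/-- For every `n ≥ 1`, `σ > 0`, `ρ ≥ 0`, `y > 0`:
`(σ²/(h(2ρ+h)))(F_{χ²ₙ(ρ²/σ²)}(y) − F_{χ²ₙ((ρ+h)²/σ²)}(y)) → f_{χ²_{n+2}(ρ²/σ²)}(y)`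
as `h → 0`. -/
theorem ncChi_cdf_difference_limit
    (n : ℕ) (hn : 1 ≤ n) (σ ρ y : ℝ) (hσ : 0 < σ) (hρ : 0 ≤ ρ) (hy : 0 < y) :
    Filter.Tendsto
      (fun h : ℝ => (σ ^ 2 / (h * (2 * ρ + h))) *
        (ncChiCdf n (ρ ^ 2 / σ ^ 2) y - ncChiCdf n ((ρ + h) ^ 2 / σ ^ 2) y))
      (nhdsWithin 0 {0}ᶜ) (nhds (ncChiPdf (n + 2) (ρ ^ 2 / σ ^ 2) y)) :=
  ncChi_cdf_difference_limit_general n hn σ ρ y hσ hy
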